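/- arXiv:2602.03909 — 3 statements merged into one kernel-verified Lean document; each statement's English description precedes it below -/
import Mathlib

section
/- Let G be a finite simple graph and let u, v, x, y be four pairwise distinct vertices such that uv and xy are edges of G while uy and xv are not edges of G. Let G' be the graph obtained from G by deleting the edges uv and xy and adding the edges uy and xv. Then every vertex has the same degree in G' as in G, and σ(G) − σ(G') = −2·(d(u) − d(x))·(d(v) − d(y)). In particular, if d(u) > d(x) and d(v) < d(y), then σ(G) > σ(G'). -/
open Finset

variable {V : Type*}

noncomputable def sigmaIndex [Fintype V] (G : SimpleGraph V) : ℤ := by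
  classical
  exact ∑ e ∈ G.edgeFinset,
    Sym2.lift ⟨fun u v => ((G.degree u : ℤ) - (G.degree v : ℤ)) ^ 2, fun u v => by ring⟩ e

noncomputable def deg [Fintype V] (G : SimpleGraph V) (v : V) : ℕ := by
  classical
  exact G.degree v

noncomputable def nbrCount [Fintype V] (G : SimpleGraph V) (v : V) (P : V → Prop) : ℕ := by
  classical
  exact ((G.neighborFinset v).filter P).card

def IsCaterpillar [Fintype V] (G : SimpleGraph V) : Prop :=
  ∃ (u w : V) (P : G.Walk u w), P.IsPath ∧
    ∀ x : V, x ∈ P.support ∨ ∃ y ∈ P.support, G.Adj x y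

/-!
Each of u, v, x, y loses exactly one neighbour and gains exactly one, so all degrees are
preserved. Hence only the four swapped edges change their contribution to σ, and
(d_u - d_v)² + (d_x - d_y)² - (d_u - d_y)² - (d_x - d_v)² = -2 (d_u - d_x)(d_v - d_y).
-/

namespace SimpleGraph

def edgeSwap (G : SimpleGraph V) (u v x y : V) : SimpleGraph V :=
  G.deleteEdges {s(u, v), s(x, y)} ⊔ fromEdgeSet {s(u, y), s(x, v)}

structure IsSwappable (G : SimpleGraph V) (u v x y : V) : Prop where
  adj_uv : G.Adj u v
  adj_xy : G.Adj x y
  not_adj_uy : ¬G.Adj u y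
  not_adj_xv : ¬G.Adj x v
  ne_uy : u ≠ y
  ne_vx : v ≠ x

theorem natCast_degree_eq_sum_ite_mem [Fintype V] [DecidableEq V] (G : SimpleGraph V)
    [DecidableRel G.Adj] (w : V) :
    (G.degree w : ℤ) = ∑ e ∈ G.edgeFinset, if w ∈ e then 1 else 0 := by
  rw [← card_incidenceFinset_eq_degree, incidenceFinset_eq_filter, Finset.natCast_card_filter]

namespace IsSwappable

variable {G : SimpleGraph V} {u v x y : V}

theorem ne_ux (h : G.IsSwappable u v x y) : u ≠ x := by
  rintro rfl
  exact h.not_adj_uy h.adj_xy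

theorem ne_vy (h : G.IsSwappable u v x y) : v ≠ y := by
  rintro rfl
  exact h.not_adj_xv h.adj_xy

theorem edgeSet_edgeSwap (h : G.IsSwappable u v x y) :
    (G.edgeSwap u v x y).edgeSet = G.edgeSet \ {s(u, v), s(x, y)} ∪ {s(u, y), s(x, v)} := by
  rw [edgeSwap, edgeSet_sup, edgeSet_deleteEdges, edgeSet_fromEdgeSet]
  congr 1
  simp [sdiff_eq_left, h.ne_uy, h.ne_vx.symm]

theorem sum_edgeFinset_edgeSwap [Fintype V] [DecidableEq V] [DecidableRel G.Adj]
    [DecidableRel (G.edgeSwap u v x y).Adj] {M : Type*} [AddCommGroup M]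
    (h : G.IsSwappable u v x y) (f : Sym2 V → M) :
    ∑ e ∈ (G.edgeSwap u v x y).edgeFinset, f e =
      ∑ e ∈ G.edgeFinset, f e - f s(u, v) - f s(x, y) + f s(u, y) + f s(x, v) := by
  have hedges : (G.edgeSwap u v x y).edgeFinset =
      insert s(u, y) (insert s(x, v) ((G.edgeFinset.erase s(u, v)).erase s(x, y))) := by
    ext e
    simp only [mem_edgeFinset, h.edgeSet_edgeSwap, Finset.mem_insert, Finset.mem_erase,
      Set.mem_union, Set.mem_sdiff, Set.mem_insert_iff, Set.mem_singleton_iff]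
    tauto
  rw [hedges, sum_insert, sum_insert, sum_erase_eq_sub, sum_erase_eq_sub]
  · abel
  all_goals simp [h.adj_uv, h.adj_xy, h.not_adj_uy, h.not_adj_xv, h.adj_uv.ne, h.ne_ux,
    h.ne_ux.symm, h.ne_vx.symm]

theorem degree_edgeSwap [Fintype V] [DecidableRel G.Adj] [DecidableRel (G.edgeSwap u v x y).Adj]
    (h : G.IsSwappable u v x y) (w : V) : (G.edgeSwap u v x y).degree w = G.degree w := by
  classical
  -- both sides are the indicator of `w ∈ {u, v, x, y}`
  have hincid : (if w ∈ s(u, y) then (1 : ℤ) else 0) + (if w ∈ s(x, v) then 1 else 0) =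
      (if w ∈ s(u, v) then 1 else 0) + (if w ∈ s(x, y) then 1 else 0) := by
    have := h.ne_ux; have := h.ne_vy; have := h.ne_uy; have := h.ne_vx; have := h.adj_uv.ne
    have := h.adj_xy.ne
    simp only [Sym2.mem_iff]
    split_ifs <;> grind
  zify
  rw [natCast_degree_eq_sum_ite_mem, natCast_degree_eq_sum_ite_mem, h.sum_edgeFinset_edgeSwap]
  linear_combination hincid

end IsSwappable

end SimpleGraph

def sigmaSummand (d : V → ℤ) : Sym2 V → ℤ :=
  Sym2.lift ⟨fun a b => (d a - d b) ^ 2, fun _ _ => by ring⟩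

theorem sigmaIndex_eq_sum [Fintype V] (G : SimpleGraph V) [DecidableRel G.Adj] :
    sigmaIndex G = ∑ e ∈ G.edgeFinset, sigmaSummand (fun w => (G.degree w : ℤ)) e := by
  unfold sigmaIndex sigmaSummand
  congr!

theorem deg_eq_degree [Fintype V] (G : SimpleGraph V) [DecidableRel G.Adj] (w : V) :
    deg G w = G.degree w := by
  unfold deg
  congr!

namespace SimpleGraph.IsSwappable

variable {G : SimpleGraph V} {u v x y : V}

theorem deg_edgeSwap [Fintype V] (h : G.IsSwappable u v x y) (w : V) :
    deg (G.edgeSwap u v x y) w = deg G w := by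
  classical
  rw [deg_eq_degree, deg_eq_degree, h.degree_edgeSwap]

theorem sigmaIndex_sub_sigmaIndex_edgeSwap [Fintype V] (h : G.IsSwappable u v x y) :
    sigmaIndex G - sigmaIndex (G.edgeSwap u v x y) =
      -2 * ((deg G u : ℤ) - deg G x) * ((deg G v : ℤ) - deg G y) := by
  classical
  have hdeg : (fun w => ((G.edgeSwap u v x y).degree w : ℤ)) = fun w => (G.degree w : ℤ) :=
    funext fun w => by rw [h.degree_edgeSwap]
  rw [sigmaIndex_eq_sum, sigmaIndex_eq_sum, hdeg, h.sum_edgeFinset_edgeSwap]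
  simp only [sigmaSummand, Sym2.lift_mk, deg_eq_degree]
  ring

end SimpleGraph.IsSwappable

theorem sigma_edge_swap_general {V : Type*} [Fintype V] (G : SimpleGraph V) (u v x y : V)
    (huy' : u ≠ y) (hvx : v ≠ x)
    (huv : G.Adj u v) (hxy : G.Adj x y) (huy : ¬G.Adj u y) (hxv : ¬G.Adj x v)
    (G' : SimpleGraph V)
    (hG' : G' = (G.deleteEdges {s(u, v), s(x, y)}) ⊔ SimpleGraph.fromEdgeSet {s(u, y), s(x, v)}) :
    (∀ w : V, deg G' w = deg G w) ∧
    sigmaIndex G - sigmaIndex G' =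
      -2 * ((deg G u : ℤ) - (deg G x : ℤ)) * ((deg G v : ℤ) - (deg G y : ℤ)) ∧
    (deg G x < deg G u → deg G v < deg G y → sigmaIndex G' < sigmaIndex G) := by
  have h : G.IsSwappable u v x y := ⟨huv, hxy, huy, hxv, huy', hvx⟩
  obtain rfl : G' = G.edgeSwap u v x y := hG'
  have hσ := h.sigmaIndex_sub_sigmaIndex_edgeSwap
  refine ⟨h.deg_edgeSwap, hσ, fun hxu hvy => ?_⟩
  have : 0 < ((deg G u : ℤ) - deg G x) * ((deg G y : ℤ) - deg G v) := by
    apply mul_pos <;> omega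
  linarith

/-- the degree-preserving edge swap and its effect on the sigma index. -/
theorem sigma_edge_swap {V : Type*} [Fintype V] (G : SimpleGraph V) (u v x y : V)
    (huv' : u ≠ v) (hux : u ≠ x) (huy' : u ≠ y) (hvx : v ≠ x) (hvy : v ≠ y) (hxy' : x ≠ y)
    (huv : G.Adj u v) (hxy : G.Adj x y) (huy : ¬G.Adj u y) (hxv : ¬G.Adj x v)
    (G' : SimpleGraph V)
    (hG' : G' = (G.deleteEdges {s(u, v), s(x, y)}) ⊔ SimpleGraph.fromEdgeSet {s(u, y), s(x, v)}) :
    (∀ w : V, deg G' w = deg G w) ∧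
    sigmaIndex G - sigmaIndex G' =
      -2 * ((deg G u : ℤ) - (deg G x : ℤ)) * ((deg G v : ℤ) - (deg G y : ℤ)) ∧
    (deg G x < deg G u → deg G v < deg G y → sigmaIndex G' < sigmaIndex G) :=
  sigma_edge_swap_general G u v x y huy' hvx huv hxy huy hxv G' hG'
end

section
/- Let m ≥ 1 and let C(n,m) be the caterpillar tree consisting of a spine path x₁,…,xₙ together with exactly m pendant leaves attached to each spine vertex. Then the Albertson index satisfies irr(C(n,m)) = m(m+1)n − 2m + 2 if n ≥ 3, and irr(C(n,m)) = m(m+1)n − 2m if n ∈ {1, 2}. -/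
open Finset

variable {V : Type*}

/-- Parent-child/spine adjacency of the caterpillar `C(n,m)`: spine vertices `Sum.inl i`
form a path, and leaf `Sum.inr (i, k)` is attached to spine vertex `Sum.inl i`. -/
def caterpillarAdj (n m : ℕ) : (Fin n ⊕ Fin n × Fin m) → (Fin n ⊕ Fin n × Fin m) → Prop
  | Sum.inl i, Sum.inl j => (i : ℕ) + 1 = (j : ℕ) ∨ (j : ℕ) + 1 = (i : ℕ)
  | Sum.inl i, Sum.inr q => i = q.1
  | Sum.inr q, Sum.inl i => i = q.1
  | Sum.inr _, Sum.inr _ => False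

/-- The caterpillar `C(n,m)`: a spine path `x₁, …, xₙ` with exactly `m` pendant leaves
attached to each spine vertex. -/
def caterpillarGraph (n m : ℕ) : SimpleGraph (Fin n ⊕ Fin n × Fin m) where
  Adj := caterpillarAdj n m
  symm := by
    constructor
    rintro (i | q) (j | q') h <;> simp_all [caterpillarAdj] <;> tauto
  loopless := by
    constructor
    rintro (i | q) h <;> simp_all [caterpillarAdj]

/-- The Albertson irregularity index `irr(G) = Σ_{uv ∈ E} |d(u) - d(v)|`. -/
noncomputable def albertsonIndex {W : Type*} [Fintype W] (G : SimpleGraph W) : ℤ := by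
  classical
  exact ∑ e ∈ G.edgeFinset,
    Sym2.lift ⟨fun u v => |(G.degree u : ℤ) - (G.degree v : ℤ)|, fun u v => abs_sub_comm _ _⟩ e

/-!
Counting every edge from both ends gives `2 * irr G = ∑ u, ∑ v ~ u, |d u - d v|`. In `C(n,m)` the
spine vertex `xᵢ` has degree `dₚ(i) + m`, where `dₚ` is the degree in the path `Pₙ`. As all spine
degrees are shifted by the same `m`, the spine edges contribute `irr Pₙ`, which is `2` for `n ≥ 3`
(only the two end edges join degrees `1` and `2`) and `0` otherwise, while each of the `m` leaves
at `xᵢ` contributes `dₚ(i) + m - 1`; the handshake count `∑ dₚ(i) = 2 (n - 1)` finishes the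
computation.
-/

namespace SimpleGraph

variable [Fintype V] (G : SimpleGraph V) [DecidableRel G.Adj]

theorem sum_dart_edge_eq_two_nsmul {M : Type*} [AddCommMonoid M] [Fintype G.edgeSet]
    (f : Sym2 V → M) :
    ∑ d : G.Dart, f d.edge = 2 • ∑ e ∈ G.edgeFinset, f e := by
  classical
  rw [← sum_fiberwise_of_maps_to (t := G.edgeFinset) (g := Dart.edge) (by simp), smul_sum]
  refine sum_congr rfl fun e he => ?_
  rw [sum_congr rfl fun d hd => congrArg f (mem_filter.1 hd).2, sum_const,
    G.dart_edge_fiber_card e (mem_edgeFinset.1 he)]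

theorem sum_dart_eq_sum_sum_ite {M : Type*} [AddCommMonoid M] (f : V → V → M) :
    ∑ d : G.Dart, f d.fst d.snd = ∑ u, ∑ v, if G.Adj u v then f u v else 0 := by
  rw [← Fintype.sum_prod_type', ← sum_filter]
  exact sum_bij' (fun d _ ↦ (d.fst, d.snd)) (fun p h ↦ ⟨p, (mem_filter.1 h).2⟩)
    (by simp) (by simp) (by simp) (by simp) (by simp)

theorem two_mul_albertsonIndex :
    2 * albertsonIndex G =
      ∑ u, ∑ v, if G.Adj u v then |(G.degree u : ℤ) - G.degree v| else 0 := by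
  classical
  have h := G.sum_dart_edge_eq_two_nsmul
    (Sym2.lift ⟨fun u v => |(G.degree u : ℤ) - G.degree v|, fun _ _ => abs_sub_comm _ _⟩)
  simp only [Dart.edge, Sym2.lift_mk] at h
  rw [← G.sum_dart_eq_sum_sum_ite, h, nsmul_eq_mul, Nat.cast_ofNat, albertsonIndex]
  congr!

end SimpleGraph

open SimpleGraph

theorem ite_add_one_eq_or_add_one_eq {M : Type*} [AddMonoid M] (i j : ℕ) (x : M) :
    (if i + 1 = j ∨ j + 1 = i then x else 0) =
      (if i + 1 = j then x else 0) + (if j + 1 = i then x else 0) := by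
  rcases eq_or_ne (i + 1) j with rfl | h
  · simp [show i + 1 + 1 ≠ i by omega]
  · simp [h]

instance (n : ℕ) : DecidableRel (pathGraph n).Adj := fun _ _ => decidable_of_iff' _ pathGraph_adj

theorem sum_sum_ite_pathGraph_adj {M : Type*} [AddCommMonoid M] (n : ℕ) (g : ℕ → ℕ → M) :
    ∑ i : Fin n, ∑ j : Fin n, (if (pathGraph n).Adj i j then g i j else 0) =
      ∑ i ∈ range (n - 1), (g i (i + 1) + g (i + 1) i) := by
  have hinner (i : ℕ) : ∑ j : Fin n, (if i + 1 = j ∨ (j : ℕ) + 1 = i then g i j else 0) =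
      ∑ j ∈ range n, (if i + 1 = j ∨ j + 1 = i then g i j else 0) :=
    Fin.sum_univ_eq_sum_range (fun j => if i + 1 = j ∨ j + 1 = i then g i j else 0) n
  simp only [pathGraph_adj, hinner]
  rw [Fin.sum_univ_eq_sum_range
    (fun i => ∑ j ∈ range n, if i + 1 = j ∨ j + 1 = i then g i j else 0) n]
  have hrange : (range n).filter (· + 1 < n) = range (n - 1) := by
    ext i; simp only [mem_filter, mem_range]; omega
  have hback : ∑ i ∈ range n, ∑ j ∈ range n, (if j + 1 = i then g i j else 0) =
      ∑ j ∈ range (n - 1), g (j + 1) j := by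
    rw [sum_comm]
    simp only [sum_ite_eq, mem_range]
    rw [← sum_filter, hrange]
  simp only [ite_add_one_eq_or_add_one_eq, sum_add_distrib, hback, sum_ite_eq, mem_range]
  rw [← sum_filter, hrange]

def pathDegree (n i : ℕ) : ℕ := (if 0 < i then 1 else 0) + (if i + 1 < n then 1 else 0)

theorem degree_pathGraph {n : ℕ} (i : Fin n) : (pathGraph n).degree i = pathDegree n i := by
  have hprev (j : ℕ) : (if j + 1 = (i : ℕ) then 1 else 0) =
      if j = i - 1 then (if 0 < (i : ℕ) then 1 else 0) else 0 := by
    split_ifs <;> omega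
  rw [← Nat.cast_id ((pathGraph n).degree i), degree_eq_sum_if_adj]
  simp only [pathGraph_adj]
  rw [Fin.sum_univ_eq_sum_range (fun j => if (i : ℕ) + 1 = j ∨ j + 1 = i then 1 else 0) n]
  simp only [ite_add_one_eq_or_add_one_eq, sum_add_distrib, hprev, sum_ite_eq, sum_ite_eq',
    mem_range, pathDegree]
  have := i.isLt
  split_ifs <;> omega

theorem sum_range_pathDegree (n : ℕ) : ∑ i ∈ range n, pathDegree n i = 2 * (n - 1) := by
  rcases n with _ | k
  · rfl
  · simp only [pathDegree, sum_add_distrib]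
    rw [sum_range_succ' (fun i => if 0 < i then 1 else 0),
      sum_range_succ (fun i => if i + 1 < k + 1 then 1 else 0)]
    simp [filter_true_of_mem fun _ => mem_range.1]
    omega

theorem sum_degree_pathGraph (n : ℕ) : ∑ i, (pathGraph n).degree i = 2 * (n - 1) := by
  simp only [degree_pathGraph]
  rw [Fin.sum_univ_eq_sum_range (pathDegree n) n, sum_range_pathDegree]

theorem sum_range_abs_sub_pathDegree (n : ℕ) :
    ∑ i ∈ range (n - 1), |(pathDegree n i : ℤ) - pathDegree n (i + 1)| =
      if 3 ≤ n then 2 else 0 := by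
  rcases le_or_gt n 2 with hn | hn
  · interval_cases n <;> simp [pathDegree]
  · obtain ⟨k, rfl⟩ := Nat.exists_eq_add_of_le' hn
    have hinterior : ∑ i ∈ range k,
        |(pathDegree (k + 3) (i + 1) : ℤ) - pathDegree (k + 3) (i + 2)| = 0 :=
      sum_eq_zero fun i hi => by
        rw [mem_range] at hi
        simp only [pathDegree]
        rw [if_pos (by omega), if_pos (by omega), if_pos (by omega), if_pos (by omega)]
        simp
    rw [if_pos (by omega), show k + 3 - 1 = k + 1 + 1 by omega, sum_range_succ, sum_range_succ',
      hinterior]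
    simp [pathDegree]

theorem albertsonIndex_pathGraph (n : ℕ) :
    albertsonIndex (pathGraph n) = if 3 ≤ n then 2 else 0 := by
  have h := two_mul_albertsonIndex (pathGraph n)
  simp only [degree_pathGraph] at h
  rw [sum_sum_ite_pathGraph_adj n fun i j => |(pathDegree n i : ℤ) - pathDegree n j|] at h
  simp only [fun i => abs_sub_comm (pathDegree n (i + 1) : ℤ) (pathDegree n i), ← two_mul,
    ← mul_sum, sum_range_abs_sub_pathDegree] at h
  exact mul_left_cancel₀ two_ne_zero h

theorem Fintype.sum_prod_ite_eq_fst {α β M : Type*} [Fintype α] [Fintype β] [DecidableEq α]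
    [AddCommMonoid M] (a : α) (c : M) :
    ∑ q : α × β, (if a = q.1 then c else 0) = Fintype.card β • c := by
  rw [Fintype.sum_prod_type' (fun x (_ : β) => if a = x then c else 0)]
  simp

section Caterpillar

variable {n m : ℕ}

instance : DecidableRel (caterpillarGraph n m).Adj
  | .inl i, .inl j => inferInstanceAs (Decidable ((i : ℕ) + 1 = j ∨ (j : ℕ) + 1 = i))
  | .inl i, .inr q => inferInstanceAs (Decidable (i = q.1))
  | .inr q, .inl i => inferInstanceAs (Decidable (i = q.1))
  | .inr _, .inr _ => inferInstanceAs (Decidable False)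

@[simp]
theorem caterpillarGraph_adj_inl_inl {i j : Fin n} :
    (caterpillarGraph n m).Adj (.inl i) (.inl j) ↔ (pathGraph n).Adj i j :=
  pathGraph_adj.symm

@[simp]
theorem caterpillarGraph_adj_inl_inr {i : Fin n} {q : Fin n × Fin m} :
    (caterpillarGraph n m).Adj (.inl i) (.inr q) ↔ i = q.1 :=
  Iff.rfl

@[simp]
theorem caterpillarGraph_adj_inr_inl {i : Fin n} {q : Fin n × Fin m} :
    (caterpillarGraph n m).Adj (.inr q) (.inl i) ↔ i = q.1 :=
  Iff.rfl

@[simp]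
theorem caterpillarGraph_not_adj_inr_inr {q q' : Fin n × Fin m} :
    ¬(caterpillarGraph n m).Adj (.inr q) (.inr q') :=
  id

theorem caterpillarGraph_degree_inl (i : Fin n) :
    (caterpillarGraph n m).degree (.inl i) = (pathGraph n).degree i + m := by
  have h := (caterpillarGraph n m).degree_eq_sum_if_adj (R := ℕ) (.inl i)
  simp only [Nat.cast_id, Fintype.sum_sum_type, caterpillarGraph_adj_inl_inl,
    caterpillarGraph_adj_inl_inr] at h
  rw [h, ← Nat.cast_id ((pathGraph n).degree i), degree_eq_sum_if_adj,
    Fintype.sum_prod_ite_eq_fst, Fintype.card_fin, smul_eq_mul, mul_one]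

theorem caterpillarGraph_degree_inr (q : Fin n × Fin m) :
    (caterpillarGraph n m).degree (.inr q) = 1 := by
  have h := (caterpillarGraph n m).degree_eq_sum_if_adj (R := ℕ) (.inr q)
  simp only [Nat.cast_id, Fintype.sum_sum_type, caterpillarGraph_adj_inr_inl,
    caterpillarGraph_not_adj_inr_inr] at h
  simp [h]

theorem albertsonIndex_caterpillarGraph (hn : 1 ≤ n) :
    albertsonIndex (caterpillarGraph n m) =
      albertsonIndex (pathGraph n) + m * (m * n + n - 2) := by
  have h := two_mul_albertsonIndex (caterpillarGraph n m)
  simp only [Fintype.sum_sum_type, caterpillarGraph_adj_inl_inl, caterpillarGraph_adj_inl_inr,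
    caterpillarGraph_adj_inr_inl, caterpillarGraph_not_adj_inr_inr, caterpillarGraph_degree_inl,
    caterpillarGraph_degree_inr, Nat.cast_add, add_sub_add_right_eq_sub, if_false,
    sum_const_zero, add_zero] at h
  rw [sum_add_distrib, ← two_mul_albertsonIndex (pathGraph n)] at h
  simp only [Nat.cast_one, abs_sub_comm (1 : ℤ), Fintype.sum_prod_ite_eq_fst, sum_ite_eq',
    mem_univ, if_true] at h
  rw [Fintype.sum_prod_type' (fun i (_ : Fin m) => |((pathGraph n).degree i : ℤ) + m - 1|)] at h
  simp only [sum_const, card_univ, Fintype.card_fin, nsmul_eq_mul, ← mul_sum] at h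
  have hsum : ∑ i, ((pathGraph n).degree i + m - 1 : ℤ) = 2 * (n - 1) + n * m - n := by
    rw [sum_sub_distrib, sum_add_distrib, ← Nat.cast_sum, sum_degree_pathGraph]
    simp only [sum_const, card_univ, Fintype.card_fin, nsmul_eq_mul, mul_one]
    push_cast [Nat.cast_sub hn]
    ring
  have hleaf : (m : ℤ) * ∑ i, |((pathGraph n).degree i : ℤ) + m - 1| =
      m * (2 * (n - 1) + n * m - n) := by
    rw [← hsum, mul_sum, mul_sum]
    refine sum_congr rfl fun i _ => ?_
    rcases m.eq_zero_or_pos with rfl | hm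
    · simp
    · rw [abs_of_nonneg (by omega)]
  rw [hleaf] at h
  apply mul_left_cancel₀ (two_ne_zero (α := ℤ))
  rw [h]
  ring

end Caterpillar

theorem albertson_caterpillarGraph_general (n m : ℕ) :
    (3 ≤ n → albertsonIndex (caterpillarGraph n m) =
      (m : ℤ) * ((m : ℤ) + 1) * (n : ℤ) - 2 * (m : ℤ) + 2) ∧
    (n = 1 ∨ n = 2 → albertsonIndex (caterpillarGraph n m) =
      (m : ℤ) * ((m : ℤ) + 1) * (n : ℤ) - 2 * (m : ℤ)) := by
  constructor
  · intro hn
    rw [albertsonIndex_caterpillarGraph (by omega), albertsonIndex_pathGraph, if_pos hn]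
    ring
  · intro hn
    rw [albertsonIndex_caterpillarGraph (by omega), albertsonIndex_pathGraph, if_neg (by omega)]
    ring

/-- the Albertson index of the caterpillar `C(n,m)`. -/
theorem albertson_caterpillarGraph (n m : ℕ) (hm : 1 ≤ m) :
    (3 ≤ n → albertsonIndex (caterpillarGraph n m) =
      (m : ℤ) * ((m : ℤ) + 1) * (n : ℤ) - 2 * (m : ℤ) + 2) ∧
    (n = 1 ∨ n = 2 → albertsonIndex (caterpillarGraph n m) =
      (m : ℤ) * ((m : ℤ) + 1) * (n : ℤ) - 2 * (m : ℤ)) :=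
  albertson_caterpillarGraph_general n m
end

section
/- Let T be a tree of order n ≥ 5 with exactly p pendant vertices, where 3 ≤ p ≤ n − 2. Then σ(T) ≤ (p − 1)³ + (p − 2)² + 1. -/
/-!
With `d` the degree, writing `(d_u - d_v)² = (d_u - 1)² + (d_v - 1)² - 2 (d_u - 1)(d_v - 1)` gives
`σ(T) = ∑_v d_v (d_v - 1)² - 2 ∑_{uv ∈ E} (d_u - 1)(d_v - 1)`.

In a tree `∑_v (d_v - 2) = -2`, so every degree is at most `p`, and the chord of the convex map
`d ↦ d (d - 1)²` on `[2, p]` bounds the first sum by `p (p² - 1) - 2 (p² + 1) + 2n`.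

Since `p ≤ n - 2`, every vertex has a neighbour that is not a leaf. Giving each vertex `u` the
weight `1` towards its leaf neighbours and `2 d_u - 3` towards the others, the two weights of an
edge sum to at most `2 (d_u - 1)(d_v - 1)`, and the weights leaving `u` sum to at least
`3 d_u - 4`; hence `∑_{uv ∈ E} (d_u - 1)(d_v - 1) ≥ n - 3`. Together:
`σ(T) ≤ p³ - 2p² - p + 4 = (p - 1)³ + (p - 2)² + 1`.
-/

open Finset

variable {V : Type*}

/-- The number of pendant (degree-one) vertices of `G`. -/
noncomputable def pendantCount [Fintype V] (G : SimpleGraph V) : ℕ := by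
  classical
  exact (Finset.univ.filter (fun w => G.degree w = 1)).card

namespace SimpleGraph

variable [Fintype V] {G : SimpleGraph V} [DecidableRel G.Adj]

theorem sum_darts_eq_sum_neighborFinset {M : Type*} [AddCommMonoid M] (f : V → V → M) :
    ∑ d : G.Dart, f d.fst d.snd = ∑ u, ∑ v ∈ G.neighborFinset u, f u v := by
  let e : G.Dart ≃ Σ u, G.neighborSet u :=
    { toFun := fun d => ⟨d.fst, d.snd, d.adj⟩
      invFun := fun s => ⟨(s.1, s.2), s.2.property⟩ }
  rw [← e.symm.sum_comp, Fintype.sum_sigma]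
  refine sum_congr rfl fun u _ => (sum_subtype _ (fun v => mem_neighborFinset G u v) (f u)).symm

theorem sum_darts_eq_sum_edgeFinset [DecidableEq V] {M : Type*} [AddCommMonoid M] (f : V → V → M) :
    ∑ d : G.Dart, f d.fst d.snd =
      ∑ e ∈ G.edgeFinset, Sym2.lift ⟨fun u v => f u v + f v u, fun _ _ => add_comm _ _⟩ e := by
  rw [← sum_fiberwise_of_maps_to (g := Dart.edge) fun d _ => mem_edgeFinset.mpr d.edge_mem]
  refine sum_congr rfl fun e he => ?_
  induction e using Sym2.ind with
  | _ u v =>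
    let d : G.Dart := ⟨(u, v), mem_edgeFinset.mp he⟩
    rw [show s(u, v) = d.edge from rfl, d.edge_fiber, sum_pair d.symm_ne.symm]
    rfl

theorem sum_edgeFinset_lift_add [DecidableEq V] {M : Type*} [AddCommMonoid M] (f : V → V → M) :
    ∑ e ∈ G.edgeFinset, Sym2.lift ⟨fun u v => f u v + f v u, fun _ _ => add_comm _ _⟩ e =
      ∑ u, ∑ v ∈ G.neighborFinset u, f u v :=
  (sum_darts_eq_sum_edgeFinset f).symm.trans (sum_darts_eq_sum_neighborFinset f)

theorem sum_neighborFinset_le_of_add_swap_le [DecidableEq V] {M : Type*} [AddCommMonoid M]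
    [PartialOrder M] [IsOrderedAddMonoid M] {f g : V → V → M}
    (h : ∀ u v, G.Adj u v → f u v + f v u ≤ g u v + g v u) :
    ∑ u, ∑ v ∈ G.neighborFinset u, f u v ≤ ∑ u, ∑ v ∈ G.neighborFinset u, g u v := by
  rw [← sum_edgeFinset_lift_add, ← sum_edgeFinset_lift_add]
  refine sum_le_sum fun e he => ?_
  induction e using Sym2.ind with
  | _ u v => exact h u v (mem_edgeFinset.mp he)

theorem sigmaIndex_eq_sum_edgeFinset :
    sigmaIndex G = ∑ e ∈ G.edgeFinset, Sym2.lift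
      ⟨fun u v => ((G.degree u : ℤ) - G.degree v) ^ 2, fun u v => by ring⟩ e := by
  unfold sigmaIndex
  congr!

theorem sigmaIndex_eq_sum_sub_sum_neighborFinset [DecidableEq V] :
    sigmaIndex G = ∑ u, ((G.degree u : ℤ) * (G.degree u - 1) ^ 2 -
      ∑ v ∈ G.neighborFinset u, ((G.degree u : ℤ) - 1) * (G.degree v - 1)) := by
  rw [sigmaIndex_eq_sum_edgeFinset]
  calc _ = ∑ e ∈ G.edgeFinset, Sym2.lift ⟨fun u v =>
          (((G.degree u : ℤ) - 1) ^ 2 - (G.degree u - 1) * (G.degree v - 1)) +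
          (((G.degree v : ℤ) - 1) ^ 2 - (G.degree v - 1) * (G.degree u - 1)),
          fun _ _ => add_comm _ _⟩ e := by
        refine sum_congr rfl fun e _ => ?_
        induction e using Sym2.ind with
        | _ u v => simp only [Sym2.lift_mk]; ring
    _ = _ := by
        rw [sum_edgeFinset_lift_add]
        refine sum_congr rfl fun u _ => ?_
        rw [sum_sub_distrib, sum_const, card_neighborFinset_eq_degree, nsmul_eq_mul]

theorem pendantCount_eq : pendantCount G = #{v | G.degree v = 1} := by
  unfold pendantCount
  congr!

theorem Connected.eq_or_adj_of_forall_adj_degree_eq_one (hG : G.Connected) {u : V}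
    (h : ∀ v, G.Adj u v → G.degree v = 1) (w : V) : w = u ∨ G.Adj u w := by
  suffices key : ∀ {x y : V}, G.Walk x y → x = u ∨ G.Adj u x → y = u ∨ G.Adj u y from
    key (hG.preconnected u w).some (Or.inl rfl)
  intro x y q
  induction q with
  | nil => exact id
  | @cons x y z hxy _ ih =>
    refine fun hx => ih ?_
    rcases hx with rfl | hux
    · exact Or.inr hxy
    · obtain ⟨_, _, huniq⟩ := degree_eq_one_iff_existsUnique_adj.mp (h x hux)
      exact Or.inl ((huniq y hxy).trans (huniq u hux.symm).symm)

theorem Connected.exists_adj_degree_ne_one (hG : G.Connected)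
    (hp : #{v | G.degree v = 1} + 2 ≤ Fintype.card V) (u : V) :
    ∃ v, G.Adj u v ∧ G.degree v ≠ 1 := by
  classical
  by_contra! h
  have hsub : ({u}ᶜ : Finset V) ⊆ ({v | G.degree v = 1} : Finset V) := fun w hw =>
    mem_filter.mpr ⟨mem_univ _,
      h w ((hG.eq_or_adj_of_forall_adj_degree_eq_one h w).resolve_left (by simpa using hw))⟩
  have := card_le_card hsub
  rw [card_compl, card_singleton] at this
  omega

theorem IsTree.sum_degree_sub_two (hG : G.IsTree) : ∑ v, ((G.degree v : ℤ) - 2) = -2 := by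
  have hdeg : ∑ v, (G.degree v : ℤ) = 2 * #G.edgeFinset := by
    exact_mod_cast G.sum_degrees_eq_twice_card_edges
  have hcard := hG.card_edgeFinset
  rw [sum_sub_distrib, hdeg, sum_const, card_univ, ← hcard]
  ring

theorem IsTree.degree_le_card_degree_eq_one [Nontrivial V] (hG : G.IsTree) (v : V) :
    G.degree v ≤ #{w | G.degree w = 1} := by
  set excess : V → ℤ := fun w => (G.degree w - 2 : ℤ) + if G.degree w = 1 then 1 else 0
  have hsum : ∑ w, excess w = #{w | G.degree w = 1} - 2 := by
    rw [sum_add_distrib, hG.sum_degree_sub_two, sum_boole]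
    ring
  have hnonneg : ∀ w, 0 ≤ excess w := fun w => by
    have := hG.connected.preconnected.degree_pos_of_nontrivial w
    simp only [excess]
    split <;> omega
  have hle := single_le_sum (fun w _ => hnonneg w) (mem_univ v)
  have htwo_le := sum_nonneg fun w (_ : w ∈ univ) => hnonneg w
  simp only [excess, hsum] at hle htwo_le
  split at hle <;> omega

theorem IsTree.sum_degree_mul_sub_one_sq_le [Nontrivial V] (hG : G.IsTree) :
    ∑ v, (G.degree v : ℤ) * (G.degree v - 1) ^ 2 ≤
      #{v | G.degree v = 1} * ((#{v | G.degree v = 1} : ℤ) ^ 2 - 1)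
        - 2 * ((#{v | G.degree v = 1} : ℤ) ^ 2 + 1) + 2 * Fintype.card V := by
  set p : ℤ := ((#{v | G.degree v = 1} : ℕ) : ℤ) with hp
  have hvertex : ∀ v, (G.degree v : ℤ) * (G.degree v - 1) ^ 2 ≤
      (p ^ 2 + 1) * (G.degree v - 2) + 2 + (if G.degree v = 1 then 1 else 0) * (p ^ 2 - 1) := by
    intro v
    have hpos := hG.connected.preconnected.degree_pos_of_nontrivial v
    have hle : (G.degree v : ℤ) ≤ p := by
      rw [hp]; exact_mod_cast hG.degree_le_card_degree_eq_one v
    split_ifs with h1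
    · simp only [h1, Nat.cast_one]
      linarith
    · have h2 : (2 : ℤ) ≤ G.degree v := by omega
      -- chord of the convex `d ↦ d (d - 1)²` on `[2, p]`: `d (d - 1)² - 2 = (d - 2) (d² + 1)`
      nlinarith [mul_nonneg (sub_nonneg.mpr h2) (sub_nonneg.mpr hle)]
  calc ∑ v, (G.degree v : ℤ) * (G.degree v - 1) ^ 2
      ≤ ∑ v, ((p ^ 2 + 1) * (G.degree v - 2) + 2 +
          (if G.degree v = 1 then 1 else 0) * (p ^ 2 - 1)) :=
        sum_le_sum fun v _ => hvertex v
    _ = _ := by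
        rw [sum_add_distrib, sum_add_distrib, ← mul_sum, ← sum_mul, hG.sum_degree_sub_two,
          sum_boole, sum_const, card_univ, nsmul_eq_mul]
        ring

theorem IsTree.two_mul_card_sub_six_le [DecidableEq V] (hG : G.IsTree)
    (hp : #{v | G.degree v = 1} + 2 ≤ Fintype.card V) :
    2 * (Fintype.card V : ℤ) - 6 ≤
      ∑ u, ∑ v ∈ G.neighborFinset u, ((G.degree u : ℤ) - 1) * (G.degree v - 1) := by
  set f : V → V → ℤ := fun u v => if G.degree v = 1 then 1 else 2 * G.degree u - 3
  have hleaves : ∀ u v, G.Adj u v → G.degree u = 1 → G.degree v ≠ 1 := by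
    intro u v huv hu
    obtain ⟨w, huw, hw⟩ := hG.connected.exists_adj_degree_ne_one hp u
    obtain ⟨_, _, huniq⟩ := degree_eq_one_iff_existsUnique_adj.mp hu
    rwa [huniq v huv, ← huniq w huw]
  have hpair : ∀ u v, G.Adj u v → f u v + f v u ≤
      ((G.degree u : ℤ) - 1) * (G.degree v - 1) + ((G.degree v : ℤ) - 1) * (G.degree u - 1) := by
    intro u v huv
    have hu := (G.degree_pos_iff_exists_adj u).mpr ⟨v, huv⟩
    have hv := (G.degree_pos_iff_exists_adj v).mpr ⟨u, huv.symm⟩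
    have hu_leaf := hleaves u v huv
    have hv_leaf := hleaves v u huv.symm
    simp only [f]
    split_ifs with h1 h2 h2
    · omega
    · simp only [h1, Nat.cast_one]; linarith
    · simp only [h2, Nat.cast_one]; linarith
    · have h1' : (2 : ℤ) ≤ G.degree v := by omega
      have h2' : (2 : ℤ) ≤ G.degree u := by omega
      nlinarith [mul_nonneg (sub_nonneg.mpr h1') (sub_nonneg.mpr h2')]
  have hvertex : ∀ u, 3 * (G.degree u : ℤ) - 4 ≤ ∑ v ∈ G.neighborFinset u, f u v := by
    intro u
    by_cases hu : 2 ≤ G.degree u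
    · obtain ⟨w, huw, hw⟩ := hG.connected.exists_adj_degree_ne_one hp u
      have hterm : ∀ v ∈ G.neighborFinset u, 0 ≤ f u v - 1 := fun v _ => by
        simp only [f]; split <;> omega
      have := single_le_sum hterm (G.mem_neighborFinset u w |>.mpr huw)
      rw [sum_sub_distrib, sum_const, card_neighborFinset_eq_degree, nsmul_one] at this
      simp only [f, if_neg hw] at this
      linarith
    · have hterm : ∀ v ∈ G.neighborFinset u, 2 * (G.degree u : ℤ) - 3 ≤ f u v := fun v _ => by
        simp only [f]; split <;> omega
      have := sum_le_sum hterm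
      rw [sum_const, card_neighborFinset_eq_degree, nsmul_eq_mul] at this
      have hu' : (G.degree u : ℤ) ≤ 1 := by omega
      nlinarith [mul_nonneg (sub_nonneg.mpr hu') (by linarith : (0 : ℤ) ≤ 2 - G.degree u)]
  calc 2 * (Fintype.card V : ℤ) - 6 = ∑ u, (3 * (G.degree u : ℤ) - 4) := by
        have := hG.sum_degree_sub_two
        rw [sum_sub_distrib, sum_const, card_univ, nsmul_eq_mul] at this
        rw [sum_sub_distrib, sum_const, card_univ, nsmul_eq_mul, ← mul_sum]
        linarith
    _ ≤ ∑ u, ∑ v ∈ G.neighborFinset u, f u v := sum_le_sum fun u _ => hvertex u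
    _ ≤ _ := sum_neighborFinset_le_of_add_swap_le hpair

end SimpleGraph

theorem sigma_tree_pendant_upper_bound_general {V : Type*} [Fintype V] (G : SimpleGraph V)
    (n p : ℕ) (htree : G.IsTree) (hn : Fintype.card V = n) (hn5 : 5 ≤ n)
    (hp : pendantCount G = p) (hpn : p ≤ n - 2) :
    sigmaIndex G ≤ ((p : ℤ) - 1) ^ 3 + ((p : ℤ) - 2) ^ 2 + 1 := by
  classical
  have : Nontrivial V := Fintype.one_lt_card_iff_nontrivial.mp (by omega)
  rw [SimpleGraph.pendantCount_eq] at hp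
  subst hp hn
  have hvertex := htree.sum_degree_mul_sub_one_sq_le
  have hedge := htree.two_mul_card_sub_six_le (by omega)
  rw [SimpleGraph.sigmaIndex_eq_sum_sub_sum_neighborFinset, sum_sub_distrib]
  linarith

/-- a tree of order `n ≥ 5` with `p` pendant vertices, `3 ≤ p ≤ n − 2`,
satisfies `σ(T) ≤ (p−1)³ + (p−2)² + 1`. -/
theorem sigma_tree_pendant_upper_bound {V : Type*} [Fintype V] (G : SimpleGraph V)
    (n p : ℕ) (htree : G.IsTree) (hn : Fintype.card V = n) (hn5 : 5 ≤ n)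
    (hp : pendantCount G = p) (hp3 : 3 ≤ p) (hpn : p ≤ n - 2) :
    sigmaIndex G ≤ ((p : ℤ) - 1) ^ 3 + ((p : ℤ) - 2) ^ 2 + 1 :=
  sigma_tree_pendant_upper_bound_general G n p htree hn hn5 hp hpn
end
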